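/- Let p ∈ [1,∞] be fixed and let 𝒞 be a compact set of n×n stochastic matrices each of which satisfies |M|_p < 1 for the metric consensus seminorm, and set λ = max_{M ∈ 𝒞} |M|_p. Then for every infinite sequence M₁, M₂, … of matrices from 𝒞, the product M_i M_{i−1} ⋯ M₁ converges as i → ∞ to a rank-one matrix of the form 𝟏c for some row vector c, and convergence occurs as fast as λ^i converges to zero: there is a constant K such that ‖M_i M_{i−1} ⋯ M₁ − 𝟏c‖ ≤ K·λ^i for all i ≥ 1. -/

import Mathlib

open Matrix Finset
open scoped ENNReal

noncomputable def matPNorm (p : ℝ≥0∞) [Fact (1 ≤ p)] {n m : ℕ}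
    (M : Matrix (Fin n) (Fin m) ℝ) : ℝ :=
  ‖LinearMap.toContinuousLinearMap
    (Matrix.toLin (PiLp.basisFun p ℝ (Fin m)) (PiLp.basisFun p ℝ (Fin n)) M)‖

noncomputable def metricSN (p : ℝ≥0∞) [Fact (1 ≤ p)] {n m : ℕ}
    (M : Matrix (Fin n) (Fin m) ℝ) : ℝ :=
  ⨅ c : Fin m → ℝ, matPNorm p (M - Matrix.of fun _ j => c j)

noncomputable def vecSN (p : ℝ≥0∞) [Fact (1 ≤ p)] {m : ℕ} (x : Fin m → ℝ) : ℝ :=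
  ⨅ c : ℝ, ‖(WithLp.equiv p (Fin m → ℝ)).symm (x - fun _ => c)‖

noncomputable def inducedSN (p : ℝ≥0∞) [Fact (1 ≤ p)] {n m : ℕ}
    (M : Matrix (Fin n) (Fin m) ℝ) : ℝ :=
  sSup {r | ∃ x : Fin m → ℝ, vecSN p x = 1 ∧ r = vecSN p (M.mulVec x)}

noncomputable def coeErg {n : ℕ} (M : Matrix (Fin n) (Fin n) ℝ) : ℝ :=
  (1 / 2) * ⨆ i : Fin n, ⨆ j : Fin n, ∑ k, |M i k - M j k|

def IsStochastic {n : ℕ} (S : Matrix (Fin n) (Fin n) ℝ) : Prop :=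
  (∀ i j, 0 ≤ S i j) ∧ ∀ i, ∑ j, S i j = 1

def IsScrambling {n : ℕ} (S : Matrix (Fin n) (Fin n) ℝ) : Prop :=
  IsStochastic S ∧ ∀ i j, ∃ k, 0 < S i k ∧ 0 < S j k

def EqRowSum (n m : ℕ) : Submodule ℝ (Matrix (Fin n) (Fin m) ℝ) where
  carrier := {M | ∀ i i', ∑ j, M i j = ∑ j, M i' j}
  add_mem' := by
    intro A B hA hB i i'
    simp only [Matrix.add_apply, Finset.sum_add_distrib, hA i i', hB i i']
  zero_mem' := by intro i i'; simp
  smul_mem' := by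
    intro c A hA i i'
    simp only [Matrix.smul_apply, smul_eq_mul, ← Finset.mul_sum, hA i i']

noncomputable def prodSeq {n : ℕ} (M : ℕ → Matrix (Fin n) (Fin n) ℝ) :
    ℕ → Matrix (Fin n) (Fin n) ℝ
  | 0 => 1
  | (i + 1) => M i * prodSeq M i

/-! If `A` has unit row sums then `(A - 𝟏d)(B - 𝟏c) = AB - 𝟏c'` for some `c'`, so the consensus
seminorm is submultiplicative along such products and the products `Pᵢ = Mᵢ₋₁ ⋯ M₀` satisfy
`|Pᵢ|_p ≤ λ^i`. Since `M - 1` annihilates every `𝟏c`, `‖Pᵢ₊₁ - Pᵢ‖ = ‖(Mᵢ - 1) Pᵢ‖ ≤ B λ^i` with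
`B` a bound for `‖M - 1‖` on the compact set `𝒞`; hence `Pᵢ` is a geometric Cauchy sequence, and
as each `Pᵢ` lies within `λ^i` of the closed subspace of matrices `𝟏c`, so does its limit.
Finally `λ < 1` because `|·|_p`, an infimum of continuous functions, is upper semicontinuous and
therefore attains its supremum on `𝒞`. -/

open Filter Topology Metric

section
variable {ι l m : Type*} {α : Type*}

theorem Matrix.mul_replicateRow [Fintype m] [Semiring α] (A : Matrix l m α) (c : ι → α) :
    A * replicateRow m c = vecMulVec (A *ᵥ 1) c := by
  ext i j
  simp [mul_apply, vecMulVec_apply, mulVec, dotProduct, Finset.sum_mul]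

def Matrix.replicateRowLinearMap (R : Type*) [Semiring R] (ι : Type*) :
    (m → R) →ₗ[R] Matrix ι m R where
  toFun := replicateRow ι
  map_add' := replicateRow_add
  map_smul' := replicateRow_smul

end

section
variable (p : ℝ≥0∞) [Fact (1 ≤ p)] {k m n : ℕ}

noncomputable def toPiLpCLM (n m : ℕ) :
    Matrix (Fin n) (Fin m) ℝ ≃ₗ[ℝ] (PiLp p (fun _ : Fin m => ℝ) →L[ℝ] PiLp p fun _ : Fin n => ℝ) :=
  (Matrix.toLin (PiLp.basisFun p ℝ (Fin m)) (PiLp.basisFun p ℝ (Fin n))).trans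
    LinearMap.toContinuousLinearMap

theorem matPNorm_eq_norm_toPiLpCLM (M : Matrix (Fin n) (Fin m) ℝ) :
    matPNorm p M = ‖toPiLpCLM p n m M‖ := rfl

theorem toPiLpCLM_mul (A : Matrix (Fin n) (Fin k) ℝ) (B : Matrix (Fin k) (Fin m) ℝ) :
    toPiLpCLM p n m (A * B) = (toPiLpCLM p n k A).comp (toPiLpCLM p k m B) := by
  ext1 x
  simp [toPiLpCLM, Matrix.toLin_mul _ (PiLp.basisFun p ℝ (Fin k))]

theorem toPiLpCLM_one : toPiLpCLM p n n 1 = ContinuousLinearMap.id ℝ _ := by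
  ext1 x
  simp [toPiLpCLM]

theorem matPNorm_nonneg (M : Matrix (Fin n) (Fin m) ℝ) : 0 ≤ matPNorm p M := norm_nonneg _

theorem matPNorm_mul_le (A : Matrix (Fin n) (Fin k) ℝ) (B : Matrix (Fin k) (Fin m) ℝ) :
    matPNorm p (A * B) ≤ matPNorm p A * matPNorm p B := by
  simp only [matPNorm_eq_norm_toPiLpCLM, toPiLpCLM_mul]
  exact ContinuousLinearMap.opNorm_comp_le _ _

theorem matPNorm_one_le : matPNorm p (1 : Matrix (Fin n) (Fin n) ℝ) ≤ 1 := by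
  rw [matPNorm_eq_norm_toPiLpCLM, toPiLpCLM_one]
  exact ContinuousLinearMap.norm_id_le

theorem continuous_matPNorm : Continuous fun M : Matrix (Fin n) (Fin m) ℝ => matPNorm p M :=
  (toPiLpCLM p n m).toLinearMap.continuous_of_finiteDimensional.norm

noncomputable def consensusSubspace (n m : ℕ) :
    Submodule ℝ (PiLp p (fun _ : Fin m => ℝ) →L[ℝ] PiLp p fun _ : Fin n => ℝ) :=
  LinearMap.range ((toPiLpCLM p n m).toLinearMap ∘ₗ replicateRowLinearMap ℝ (Fin n))

theorem mem_consensusSubspace {L : PiLp p (fun _ : Fin m => ℝ) →L[ℝ] PiLp p fun _ : Fin n => ℝ} :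
    L ∈ consensusSubspace p n m ↔ ∃ c, toPiLpCLM p n m (replicateRow (Fin n) c) = L :=
  Iff.rfl

theorem metricSN_nonneg (M : Matrix (Fin n) (Fin m) ℝ) : 0 ≤ metricSN p M :=
  Real.iInf_nonneg fun _ => matPNorm_nonneg p _

theorem bddBelow_range_matPNorm_sub_replicateRow (M : Matrix (Fin n) (Fin m) ℝ) :
    BddBelow (Set.range fun c => matPNorm p (M - replicateRow (Fin n) c)) :=
  ⟨0, by rintro _ ⟨c, rfl⟩; exact matPNorm_nonneg p _⟩

theorem metricSN_le (M : Matrix (Fin n) (Fin m) ℝ) (c : Fin m → ℝ) :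
    metricSN p M ≤ matPNorm p (M - replicateRow (Fin n) c) :=
  ciInf_le (bddBelow_range_matPNorm_sub_replicateRow p M) c

theorem metricSN_eq_iInf (M : Matrix (Fin n) (Fin m) ℝ) :
    metricSN p M = ⨅ c, matPNorm p (M - replicateRow (Fin n) c) := rfl

theorem le_metricSN {M : Matrix (Fin n) (Fin m) ℝ} {a : ℝ}
    (h : ∀ c, a ≤ matPNorm p (M - replicateRow (Fin n) c)) : a ≤ metricSN p M :=
  le_ciInf h

theorem metricSN_one_le : metricSN p (1 : Matrix (Fin n) (Fin n) ℝ) ≤ 1 := by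
  refine (metricSN_le p 1 0).trans ?_
  rw [replicateRow_zero, sub_zero]
  exact matPNorm_one_le p

theorem upperSemicontinuous_metricSN :
    UpperSemicontinuous fun M : Matrix (Fin n) (Fin m) ℝ => metricSN p M :=
  upperSemicontinuous_ciInf (bddBelow_range_matPNorm_sub_replicateRow p) fun _ =>
    ((continuous_matPNorm p).comp (continuous_id.sub continuous_const)).upperSemicontinuous

theorem infDist_le_metricSN (M : Matrix (Fin n) (Fin m) ℝ) :
    infDist (toPiLpCLM p n m M) (consensusSubspace p n m) ≤ metricSN p M :=
  le_metricSN p fun c =>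
    (infDist_le_dist_of_mem ((mem_consensusSubspace p).2 ⟨c, rfl⟩)).trans_eq <| by
      rw [dist_eq_norm, ← map_sub]; rfl

theorem sub_replicateRow_mul_sub_replicateRow {A : Matrix (Fin n) (Fin k) ℝ} (hA : A *ᵥ 1 = 1)
    (d : Fin k → ℝ) (B : Matrix (Fin k) (Fin m) ℝ) (c : Fin m → ℝ) :
    (A - replicateRow (Fin n) d) * (B - replicateRow (Fin k) c) =
      A * B - replicateRow (Fin n) (c + d ᵥ* B - (d ⬝ᵥ 1) • c) := by
  rw [Matrix.sub_mul, Matrix.mul_sub, Matrix.mul_sub, mul_replicateRow, hA, one_vecMulVec,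
    ← replicateRow_vecMul, mul_replicateRow, replicateRow_mulVec_eq_const]
  ext i j
  simp only [Matrix.sub_apply, replicateRow_apply, vecMulVec_apply, Function.const_apply,
    Pi.sub_apply, Pi.add_apply, Pi.smul_apply, smul_eq_mul]
  ring

theorem matPNorm_mul_le_metricSN {A : Matrix (Fin n) (Fin k) ℝ} (hA : A *ᵥ 1 = 0)
    (P : Matrix (Fin k) (Fin m) ℝ) : matPNorm p (A * P) ≤ matPNorm p A * metricSN p P := by
  rw [metricSN_eq_iInf p P, Real.mul_iInf_of_nonneg (matPNorm_nonneg p A)]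
  refine le_ciInf fun c => ?_
  have hAc : A * replicateRow (Fin k) c = 0 := by rw [mul_replicateRow, hA, zero_vecMulVec]
  calc matPNorm p (A * P) = matPNorm p (A * (P - replicateRow (Fin k) c)) := by
        rw [Matrix.mul_sub, hAc, sub_zero]
    _ ≤ _ := matPNorm_mul_le p _ _

theorem metricSN_mul_le {A : Matrix (Fin n) (Fin k) ℝ} (hA : A *ᵥ 1 = 1)
    (B : Matrix (Fin k) (Fin m) ℝ) : metricSN p (A * B) ≤ metricSN p A * metricSN p B := by
  rw [metricSN_eq_iInf p A, Real.iInf_mul_of_nonneg (metricSN_nonneg p B)]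
  refine le_ciInf fun d => ?_
  rw [metricSN_eq_iInf p B, Real.mul_iInf_of_nonneg (matPNorm_nonneg p _)]
  refine le_ciInf fun c => ?_
  calc metricSN p (A * B)
      ≤ matPNorm p ((A - replicateRow (Fin n) d) * (B - replicateRow (Fin k) c)) := by
        rw [sub_replicateRow_mul_sub_replicateRow hA]
        exact metricSN_le p _ _
    _ ≤ _ := matPNorm_mul_le p _ _

end

theorem IsClosed.mem_of_tendsto_infDist {X β : Type*} [PseudoMetricSpace X] {S : Set X}
    (hS : IsClosed S) (hne : S.Nonempty) {l : Filter β} [l.NeBot] {u : β → X} {x : X}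
    (hu : Tendsto u l (𝓝 x)) (hdist : Tendsto (fun i => infDist (u i) S) l (𝓝 0)) : x ∈ S :=
  (hS.mem_iff_infDist_zero hne).2 <|
    tendsto_nhds_unique (((continuous_infDist_pt S).tendsto x).comp hu) hdist

section
variable (p : ℝ≥0∞) [Fact (1 ≤ p)] {n : ℕ} {M : ℕ → Matrix (Fin n) (Fin n) ℝ} {lam B : ℝ}

theorem metricSN_prodSeq_le (hM : ∀ i, M i *ᵥ 1 = 1) (hlam : ∀ i, metricSN p (M i) ≤ lam)
    (i : ℕ) : metricSN p (prodSeq M i) ≤ lam ^ i := by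
  induction i with
  | zero => exact metricSN_one_le p
  | succ i ih =>
    calc metricSN p (prodSeq M (i + 1)) ≤ metricSN p (M i) * metricSN p (prodSeq M i) :=
          metricSN_mul_le p (hM i) _
      _ ≤ lam * lam ^ i :=
          mul_le_mul (hlam i) ih (metricSN_nonneg p _) ((metricSN_nonneg p _).trans (hlam i))
      _ = lam ^ (i + 1) := (pow_succ' lam i).symm

theorem matPNorm_prodSeq_succ_sub_le (hM : ∀ i, M i *ᵥ 1 = 1)
    (hlam : ∀ i, metricSN p (M i) ≤ lam) (hB : ∀ i, matPNorm p (M i - 1) ≤ B) (i : ℕ) :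
    matPNorm p (prodSeq M (i + 1) - prodSeq M i) ≤ B * lam ^ i := by
  have hrow : (M i - 1) *ᵥ 1 = 0 := by rw [sub_mulVec, hM, one_mulVec, sub_self]
  calc matPNorm p (prodSeq M (i + 1) - prodSeq M i) = matPNorm p ((M i - 1) * prodSeq M i) := by
        rw [prodSeq, Matrix.sub_mul, Matrix.one_mul]
    _ ≤ matPNorm p (M i - 1) * metricSN p (prodSeq M i) := matPNorm_mul_le_metricSN p hrow _
    _ ≤ B * lam ^ i :=
        mul_le_mul (hB i) (metricSN_prodSeq_le p hM hlam i) (metricSN_nonneg p _)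
          ((matPNorm_nonneg p _).trans (hB i))

theorem exists_matPNorm_prodSeq_sub_replicateRow_le (hM : ∀ i, M i *ᵥ 1 = 1)
    (hlam : ∀ i, metricSN p (M i) ≤ lam) (hlam_lt : lam < 1)
    (hB : ∀ i, matPNorm p (M i - 1) ≤ B) :
    ∃ c, ∀ i, matPNorm p (prodSeq M i - replicateRow (Fin n) c) ≤ B / (1 - lam) * lam ^ i := by
  have hlam_nonneg : 0 ≤ lam := (metricSN_nonneg p _).trans (hlam 0)
  set f := fun i => toPiLpCLM p n n (prodSeq M i)
  have hstep : ∀ i, dist (f i) (f (i + 1)) ≤ B * lam ^ i := fun i => by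
    rw [dist_comm, dist_eq_norm, ← map_sub]
    exact matPNorm_prodSeq_succ_sub_le p hM hlam hB i
  obtain ⟨L, hL⟩ := cauchySeq_tendsto_of_complete (cauchySeq_of_le_geometric lam B hlam_lt hstep)
  have hL_mem : L ∈ consensusSubspace p n n := by
    refine (consensusSubspace p n n).closed_of_finiteDimensional.mem_of_tendsto_infDist
      ⟨0, zero_mem _⟩ hL ?_
    refine squeeze_zero (fun _ => infDist_nonneg) (fun i => ?_)
      (tendsto_pow_atTop_nhds_zero_of_lt_one hlam_nonneg hlam_lt)
    exact (infDist_le_metricSN p _).trans (metricSN_prodSeq_le p hM hlam i)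
  obtain ⟨c, rfl⟩ := (mem_consensusSubspace p).1 hL_mem
  refine ⟨c, fun i => ?_⟩
  have := dist_le_of_le_geometric_of_tendsto lam B hlam_lt hstep hL i
  rwa [dist_eq_norm, ← map_sub, mul_div_right_comm] at this

end

/-- Let p ∈ [1,∞] and let 𝒞 be a compact set of n×n stochastic
matrices with |M|_p < 1 for each M ∈ 𝒞 (metric consensus seminorm), and
λ = max_{M ∈ 𝒞} |M|_p. For every infinite sequence of matrices from 𝒞, the product
M_i⋯M₁ converges to a rank-one matrix 𝟏c as fast as λ^i → 0: there is K with
‖M_i⋯M₁ − 𝟏c‖ ≤ K·λ^i for all i ≥ 1. -/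
theorem metricSN_contraction_convergence (n : ℕ) (p : ℝ≥0∞) [Fact (1 ≤ p)]
    (C : Set (Matrix (Fin n) (Fin n) ℝ)) (hC : IsCompact C)
    (hstoch : ∀ M ∈ C, IsStochastic M)
    (hcontr : ∀ M ∈ C, metricSN p M < 1) :
    ∀ Mseq : ℕ → Matrix (Fin n) (Fin n) ℝ, (∀ i, Mseq i ∈ C) →
      ∃ c : Fin n → ℝ, ∃ K : ℝ,
        Filter.Tendsto
          (fun i => matPNorm p (prodSeq Mseq i - Matrix.of fun _ j => c j))
          Filter.atTop (nhds 0) ∧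
        ∀ i : ℕ, 1 ≤ i →
          matPNorm p (prodSeq Mseq i - Matrix.of fun _ j => c j)
            ≤ K * (sSup ((fun M => metricSN p M) '' C)) ^ i := by
  intro Mseq hMseq
  obtain ⟨M₀, hM₀, hmax⟩ :=
    ((upperSemicontinuous_metricSN p).upperSemicontinuousOn C).exists_isMaxOn ⟨_, hMseq 0⟩ hC
  have hsSup : sSup ((fun M => metricSN p M) '' C) = metricSN p M₀ :=
    IsGreatest.csSup_eq ⟨Set.mem_image_of_mem _ hM₀, Set.forall_mem_image.2 hmax⟩
  obtain ⟨B, hB⟩ := hC.exists_bound_of_continuousOn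
    ((continuous_matPNorm p).comp (continuous_id.sub continuous_const)).continuousOn
  have hrow : ∀ i, Mseq i *ᵥ 1 = 1 := fun i =>
    funext fun j => by simpa [mulVec, dotProduct] using (hstoch _ (hMseq i)).2 j
  obtain ⟨c, hc⟩ := exists_matPNorm_prodSeq_sub_replicateRow_le p (lam := metricSN p M₀) hrow
    (fun i => hmax (hMseq i)) (hcontr M₀ hM₀) (fun i => (le_abs_self _).trans (hB _ (hMseq i)))
  refine ⟨c, _, squeeze_zero (fun _ => matPNorm_nonneg p _) hc ?_, fun i _ => hsSup ▸ hc i⟩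
  simpa using
    (tendsto_pow_atTop_nhds_zero_of_lt_one (metricSN_nonneg p M₀) (hcontr M₀ hM₀)).const_mul _
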